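/- Let G be an (s,t)-layered graph and P a simple s-to-t path whose sequence of back-edges, in the order of traversal, is nonempty. Let A be the tail of the first back-edge and B the head of the last back-edge. Then the decomposition P = P_1 ∘ P_0 ∘ P_2, where P_1 = P_{s→A}, P_0 = P_{A→B}, P_2 = P_{B→t}, satisfies: P_1 and P_2 consist entirely of forward-edges (so λ is strictly increasing along each), w(P_1) = d(s,A), and w(P_2) = d(s,t) − d(s,B). -/

import Mathlib

variable {V : Type*}

/-- Total weight of a walk given as a list of vertices. -/
def walkWt (w : V → V → ℝ) : List V → ℝ
  | [] => 0
  | [_] => 0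
  | a :: b :: rest => w a b + walkWt w (b :: rest)

/-- The list of (directed) edges traversed by a walk. -/
def listEdges : List V → List (V × V)
  | [] => []
  | [_] => []
  | a :: b :: rest => (a, b) :: listEdges (b :: rest)

/-- `l` is a walk from `u` to `v` in the digraph with edge relation `E`. -/
def IsWalkFrom (E : V → V → Prop) (u v : V) (l : List V) : Prop :=
  l.Chain' E ∧ l.head? = some u ∧ l.getLast? = some v

/-- `l` is a (simple) path from `u` to `v`. -/
def IsPathFrom (E : V → V → Prop) (u v : V) (l : List V) : Prop :=
  IsWalkFrom E u v l ∧ l.Nodup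

/-- `d` is the shortest-path distance function of `(E, w)`: it lower-bounds the weight of
every path, and is achieved by some path whenever some path exists. -/
def IsDistFn (E : V → V → Prop) (w : V → V → ℝ) (d : V → V → ℝ) : Prop :=
  (∀ u v l, IsPathFrom E u v l → d u v ≤ walkWt w l) ∧
  (∀ u v, (∃ l, IsPathFrom E u v l) → ∃ l, IsPathFrom E u v l ∧ walkWt w l = d u v)

/-- All edge weights are (strictly) positive. -/
def PosWeights (E : V → V → Prop) (w : V → V → ℝ) : Prop :=
  ∀ u v, E u v → 0 < w u v

/-- A back-edge relative to source `s`: `d(s,u) + w(u,v) > d(s,v)`. -/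
def IsBackEdge (E : V → V → Prop) (w : V → V → ℝ) (d : V → V → ℝ) (s : V) (p : V × V) : Prop :=
  E p.1 p.2 ∧ d s p.2 < d s p.1 + w p.1 p.2

/-- A forward-edge relative to source `s`: `d(s,u) + w(u,v) = d(s,v)`. -/
def IsForwardEdge (E : V → V → Prop) (w : V → V → ℝ) (d : V → V → ℝ) (s : V) (p : V × V) : Prop :=
  E p.1 p.2 ∧ d s p.1 + w p.1 p.2 = d s p.2

/-- A forward path: all its edges are forward-edges. -/
def IsForwardPath (E : V → V → Prop) (w : V → V → ℝ) (d : V → V → ℝ) (s : V) (l : List V) : Prop :=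
  ∀ p ∈ listEdges l, IsForwardEdge E w d s p

/-- `(s,t)`-straight graph: every vertex lies on a shortest `s → t` path. -/
def IsStraight (E : V → V → Prop) (w : V → V → ℝ) (d : V → V → ℝ) (s t : V) : Prop :=
  (∀ u, d s u + d u t = d s t) ∧
  (∀ u, ∃ l, IsPathFrom E s t l ∧ u ∈ l ∧ walkWt w l = d s t)

/-- `(s,t)`-layered graph. -/
def IsLayered (E : V → V → Prop) (w : V → V → ℝ) (d : V → V → ℝ) (s t : V) : Prop :=
  IsStraight E w d s t ∧
  (∀ u v, E u v → d s u ≠ d s v) ∧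
  (∀ u v, E u v → d s u < d s v → ∀ x, d s x ≤ d s u ∨ d s u + w u v ≤ d s x)

/-- The layer of `u`: the rank of `d(s,u)` among the distinct values of `d(s,·)`. -/
noncomputable def layer [Fintype V] (d : V → V → ℝ) (s : V) (u : V) : ℕ :=
  ((Finset.univ.image (fun x : V => d s x)).filter (fun p => p ≤ d s u)).card

/-- An `s → t` not-shortest path. -/
def IsNotShortest (E : V → V → Prop) (w : V → V → ℝ) (d : V → V → ℝ) (s t : V)
    (l : List V) : Prop :=
  IsPathFrom E s t l ∧ d s t < walkWt w l

/-- An `s → t` next-to-shortest path: a not-shortest path of minimum weight. -/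
def IsNextToShortest (E : V → V → Prop) (w : V → V → ℝ) (d : V → V → ℝ) (s t : V)
    (l : List V) : Prop :=
  IsNotShortest E w d s t l ∧ ∀ l', IsNotShortest E w d s t l' → walkWt w l ≤ walkWt w l'

/-- Back-edge decomposition of a path `l = l1 ∘ l0 ∘ l2`, where `l0` runs from `A` to `B`,
starting with the first back-edge of `l` and ending with the last one. -/
def IsBEDecomp (E : V → V → Prop) (w : V → V → ℝ) (d : V → V → ℝ) (s t : V)
    (l l1 l0 l2 : List V) (A B : V) : Prop :=
  IsPathFrom E s A l1 ∧ IsPathFrom E A B l0 ∧ IsPathFrom E B t l2 ∧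
  l = l1 ++ l0.tail ++ l2.tail ∧
  (∀ p ∈ listEdges l1, ¬ IsBackEdge E w d s p) ∧
  (∀ p ∈ listEdges l2, ¬ IsBackEdge E w d s p) ∧
  (∃ p, (listEdges l0).head? = some p ∧ IsBackEdge E w d s p) ∧
  (∃ p, (listEdges l0).getLast? = some p ∧ IsBackEdge E w d s p)


/-!
Along any edge `(u,v)` of a straight graph, `d(s,v) ≤ d(s,u) + w(u,v)`: the prefix up to `u` of a
shortest `s → t` path through `u` is a shortest `s → u` path, and either `v` already lies on it
(so `d(s,v) ≤ d(s,u)`) or appending `(u,v)` to it gives a simple `s → v` path. Hence every edge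
that is not a back-edge is a forward-edge, so `P₁` and `P₂` are forward paths. Along a forward path
the weight telescopes to the difference of the distances from `s` of its endpoints, and since
weights are positive, `d(s,·)`, and with it the layer, strictly increases.
-/

theorem isChain_iff_forall_mem_listEdges (R : V → V → Prop) :
    ∀ l : List V, l.IsChain R ↔ ∀ p ∈ listEdges l, R p.1 p.2
  | [] | [_] => by simp [listEdges]
  | a :: b :: rest => by
    simp [listEdges, List.isChain_cons_cons, isChain_iff_forall_mem_listEdges R (b :: rest)]

theorem walkWt_append_cons (w : V → V → ℝ) :
    ∀ (xs : List V) (m : V) (ys : List V),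
      walkWt w (xs ++ m :: ys) = walkWt w (xs ++ [m]) + walkWt w (m :: ys)
  | [], _, _ | [_], _, _ => by simp [walkWt]
  | a :: b :: rest, m, ys => by
    have ih := walkWt_append_cons w (b :: rest) m ys
    simp only [List.cons_append, walkWt] at ih ⊢
    linarith

theorem walkWt_concat (w : V → V → ℝ) (xs : List V) (u v : V) :
    walkWt w (xs ++ [u] ++ [v]) = walkWt w (xs ++ [u]) + w u v := by
  rw [List.append_assoc, List.singleton_append, walkWt_append_cons]
  simp [walkWt]

theorem walkWt_nonneg {E : V → V → Prop} {w : V → V → ℝ} (hpos : PosWeights E w) :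
    ∀ {l : List V}, l.IsChain E → 0 ≤ walkWt w l
  | [], _ | [_], _ => le_rfl
  | a :: b :: rest, h => by
    rw [List.isChain_cons_cons] at h
    exact add_nonneg (hpos a b h.1).le (walkWt_nonneg hpos h.2)

section Paths

variable {E : V → V → Prop} {u v x : V}

theorem IsPathFrom.split {xs ys : List V} (h : IsPathFrom E u v (xs ++ x :: ys)) :
    IsPathFrom E u x (xs ++ [x]) ∧ IsPathFrom E x v (x :: ys) := by
  obtain ⟨⟨hc, hh, hl⟩, hnd⟩ := h
  change List.IsChain E _ at hc
  rw [← List.singleton_append, ← List.append_assoc] at hc hnd hl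
  rw [List.isChain_append] at hc
  rw [List.nodup_append] at hnd
  have hx : x ∉ ys := fun hmem => hnd.2.2 x (by simp) x hmem rfl
  refine ⟨⟨⟨hc.1, ?_, by simp⟩, hnd.1⟩, ⟨⟨?_, rfl, ?_⟩, List.nodup_cons.2 ⟨hx, hnd.2.1⟩⟩⟩
  · cases xs <;> simpa using hh
  · exact List.isChain_cons.2 ⟨fun y hy => hc.2.2 x (by simp) y hy, hc.2.1⟩
  · cases ys with
    | nil => simpa using hl
    | cons b bs => simpa [List.getLast?_cons_cons] using hl

theorem IsPathFrom.concat {l : List V} (h : IsPathFrom E u v l) (he : E v x) (hx : x ∉ l) :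
    IsPathFrom E u x (l ++ [x]) := by
  obtain ⟨⟨hc, hh, hl⟩, hnd⟩ := h
  refine ⟨⟨?_, ?_, List.getLast?_concat⟩, List.nodup_append.2 ⟨hnd, List.nodup_singleton x, ?_⟩⟩
  · refine List.isChain_append.2 ⟨hc, List.isChain_singleton x, fun a ha b hb => ?_⟩
    simp_all
  · cases l <;> simp_all
  · rintro a ha b hb rfl
    simp_all

end Paths

section Distances

variable {E : V → V → Prop} {w d : V → V → ℝ} {s t : V}

theorem IsDistFn.dist_self_eq_zero (hpos : PosWeights E w) (hd : IsDistFn E w d) (s : V) :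
    d s s = 0 := by
  have hs : IsPathFrom E s s [s] :=
    ⟨⟨List.isChain_singleton s, rfl, rfl⟩, List.nodup_singleton s⟩
  obtain ⟨l, hl, hwl⟩ := hd.2 s s ⟨[s], hs⟩
  have := walkWt_nonneg hpos hl.1.1
  have := hd.1 s s [s] hs
  simp only [walkWt] at this
  linarith

theorem IsDistFn.dist_le_of_mem_of_walkWt_eq (hpos : PosWeights E w) (hd : IsDistFn E w d)
    {u v : V} {l : List V} (hl : IsPathFrom E s u l) (hwl : walkWt w l = d s u) (hv : v ∈ l) :
    d s v ≤ d s u := by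
  obtain ⟨xs, ys, rfl⟩ := List.append_of_mem hv
  obtain ⟨hpre, hsuf⟩ := hl.split
  have := hd.1 _ _ _ hpre
  have := walkWt_nonneg hpos hsuf.1.1
  have := walkWt_append_cons w xs v ys
  linarith

theorem IsStraight.dist_le_dist_add (hpos : PosWeights E w) (hd : IsDistFn E w d)
    (hS : IsStraight E w d s t) {u v : V} (he : E u v) : d s v ≤ d s u + w u v := by
  obtain ⟨l, hl, hu, hwl⟩ := hS.2 u
  obtain ⟨xs, ys, rfl⟩ := List.append_of_mem hu
  obtain ⟨hpre, hsuf⟩ := hl.split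
  have hpre_shortest : walkWt w (xs ++ [u]) = d s u := by
    have := hd.1 _ _ _ hpre
    have := hd.1 _ _ _ hsuf
    have := walkWt_append_cons w xs u ys
    have := hS.1 u
    linarith
  by_cases hv : v ∈ xs ++ [u]
  · linarith [hd.dist_le_of_mem_of_walkWt_eq hpos hpre hpre_shortest hv, hpos u v he]
  · calc d s v ≤ walkWt w (xs ++ [u] ++ [v]) := hd.1 _ _ _ (hpre.concat he hv)
      _ = d s u + w u v := by rw [walkWt_concat, hpre_shortest]

theorem IsStraight.isForwardEdge_of_not_isBackEdge (hpos : PosWeights E w)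
    (hd : IsDistFn E w d) (hS : IsStraight E w d s t) {p : V × V} (he : E p.1 p.2)
    (hnb : ¬ IsBackEdge E w d s p) : IsForwardEdge E w d s p :=
  ⟨he, le_antisymm (not_lt.1 fun h => hnb ⟨he, h⟩) (hS.dist_le_dist_add hpos hd he)⟩

theorem IsStraight.isForwardPath_of_not_isBackEdge (hpos : PosWeights E w)
    (hd : IsDistFn E w d) (hS : IsStraight E w d s t) {l : List V} (hl : l.IsChain E)
    (hnb : ∀ p ∈ listEdges l, ¬ IsBackEdge E w d s p) : IsForwardPath E w d s l :=
  fun p hp => hS.isForwardEdge_of_not_isBackEdge hpos hd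
    ((isChain_iff_forall_mem_listEdges E l).1 hl p hp) (hnb p hp)

theorem IsForwardPath.walkWt_eq_sub :
    ∀ {l : List V} {a b : V}, IsForwardPath E w d s l → l.head? = some a →
      l.getLast? = some b → walkWt w l = d s b - d s a
  | [], _, _, _, ha, _ => by simp at ha
  | [_], _, _, _, ha, hb => by simp_all [walkWt]
  | x :: y :: rest, a, b, hf, ha, hb => by
    obtain rfl : x = a := by simpa using ha
    have hxy := (hf (x, y) (by simp [listEdges])).2
    have ih := IsForwardPath.walkWt_eq_sub (l := y :: rest)
      (fun p hp => hf p (by simp [listEdges, hp])) rfl (by simpa using hb)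
    simp only [walkWt, ih]
    linarith

theorem layer_lt_layer [Fintype V] {u v : V} (h : d s u < d s v) :
    layer d s u < layer d s v := by
  refine Finset.card_lt_card <| (Finset.ssubset_iff_of_subset ?_).2
    ⟨d s v, by simp, by simp [h]⟩
  intro x hx
  simp only [Finset.mem_filter] at hx ⊢
  exact ⟨hx.1, hx.2.trans h.le⟩

theorem IsForwardPath.isChain_layer [Fintype V] (hpos : PosWeights E w) {l : List V}
    (hf : IsForwardPath E w d s l) : l.IsChain (fun a b => layer d s a < layer d s b) :=
  (isChain_iff_forall_mem_listEdges _ l).2 fun p hp =>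
    have ⟨he, hfwd⟩ := hf p hp
    layer_lt_layer (by linarith [hpos _ _ he])

end Distances

theorem stmt19_general [Fintype V] (E : V → V → Prop) (w d : V → V → ℝ) (s t A B : V)
    (l l1 l0 l2 : List V)
    (hpos : PosWeights E w) (hd : IsDistFn E w d)
    (hL : IsLayered E w d s t)
    (hdec : IsBEDecomp E w d s t l l1 l0 l2 A B) :
    IsForwardPath E w d s l1 ∧ IsForwardPath E w d s l2 ∧
    l1.Chain' (fun a b => layer d s a < layer d s b) ∧
    l2.Chain' (fun a b => layer d s a < layer d s b) ∧
    walkWt w l1 = d s A ∧ walkWt w l2 = d s t - d s B := by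
  obtain ⟨h1, -, h2, -, hnb1, hnb2, -, -⟩ := hdec
  have hf1 := hL.1.isForwardPath_of_not_isBackEdge hpos hd h1.1.1 hnb1
  have hf2 := hL.1.isForwardPath_of_not_isBackEdge hpos hd h2.1.1 hnb2
  refine ⟨hf1, hf2, hf1.isChain_layer hpos, hf2.isChain_layer hpos, ?_,
    hf2.walkWt_eq_sub h2.1.2.1 h2.1.2.2⟩
  rw [hf1.walkWt_eq_sub h1.1.2.1 h1.1.2.2, hd.dist_self_eq_zero hpos, sub_zero]

/-- for the back-edge decomposition of a simple `s → t` path with at least one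
back-edge, the prefix `l1` and suffix `l2` consist entirely of forward-edges (so the layer
strictly increases along each), with `w(l1) = d(s,A)` and `w(l2) = d(s,t) − d(s,B)`. -/
theorem stmt19 [Fintype V] (E : V → V → Prop) (w d : V → V → ℝ) (s t A B : V)
    (l l1 l0 l2 : List V)
    (hpos : PosWeights E w) (hd : IsDistFn E w d)
    (hL : IsLayered E w d s t)
    (hP : IsPathFrom E s t l)
    (hdec : IsBEDecomp E w d s t l l1 l0 l2 A B) :
    IsForwardPath E w d s l1 ∧ IsForwardPath E w d s l2 ∧
    l1.Chain' (fun a b => layer d s a < layer d s b) ∧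
    l2.Chain' (fun a b => layer d s a < layer d s b) ∧
    walkWt w l1 = d s A ∧ walkWt w l2 = d s t - d s B :=
  stmt19_general E w d s t A B l l1 l0 l2 hpos hd hL hdec
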